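/- arXiv:0711.0875 — 4 statements merged into one kernel-verified Lean document; each statement's English description precedes it below -/
import Mathlib

section
/- Let σ_x = [[0,1],[1,0]] and σ_z = [[1,0],[0,−1]], let θ ∈ ℝ, and let n·σ = sin θ · σ_x + cos θ · σ_z. Let ψ ∈ ℂ² be any unit eigenvector of n·σ. Let p = (|ψ_1|², |ψ_2|²) be the measurement distribution of ψ in the σ_z eigenbasis (the standard basis) and let q be the measurement distribution of ψ in an orthonormal eigenbasis of n·σ (so q = (1,0) or (0,1)). Then R(p) + R(q) = 2 − h(cos²(θ/2)), where h(x) = −x log₂ x − (1−x) log₂(1−x) is the binary entropy; in particular R(p) + R(q) > 1 unless cos θ = 0. -/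
open Real Matrix ComplexConjugate

/-!
Since `(n·σ)² = 1`, the eigenvalue of ψ is `ε = ±1`, and the eigenvalue equations force
`‖ψ 0‖² = (1 + ε cos θ)/2`, i.e. `p = (cos²(θ/2), sin²(θ/2))` up to order.
The knowledge of a two-point distribution `(a, 1 - a)` is `1 - h(a)`, while a point mass has
knowledge `1`; so `R(p) + R(q) = 2 - h(cos²(θ/2))`, and `h < 1` away from `a = 1/2`.
-/

lemma sq_eq_one_of_mulVec_eq_smul {K n : Type*} [Field K] [Fintype n] [DecidableEq n]
    {A : Matrix n n K} (hA : A * A = 1) {ψ : n → K} (hψ : ψ ≠ 0) {c : K}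
    (h : A *ᵥ ψ = c • ψ) : c ^ 2 = 1 := by
  have hψ' : c ^ 2 • ψ = (1 : K) • ψ := by
    calc c ^ 2 • ψ = A *ᵥ (A *ᵥ ψ) := by rw [h, mulVec_smul, h, smul_smul, sq]
      _ = (1 : K) • ψ := by rw [mulVec_mulVec, hA, one_mulVec, one_smul]
  exact smul_left_injective K hψ hψ'

lemma pauli_combination_mul_self {R : Type*} [CommRing R] {s c : R} (h : s ^ 2 + c ^ 2 = 1) :
    (s • !![0, 1; 1, 0] + c • !![1, 0; 0, -1] : Matrix (Fin 2) (Fin 2) R)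
      * (s • !![0, 1; 1, 0] + c • !![1, 0; 0, -1]) = 1 := by
  ext i j
  fin_cases i <;> fin_cases j <;>
    simp [Matrix.mul_apply, Fin.sum_univ_two] <;> first | ring1 | linear_combination h

lemma norm_sq_zero_of_pauli_eigen {s co ε : ℝ} (hε : ε ^ 2 = 1) {ψ : Fin 2 → ℂ}
    (hunit : ‖ψ 0‖ ^ 2 + ‖ψ 1‖ ^ 2 = 1)
    (h : ((s : ℂ) • !![0, 1; 1, 0] + (co : ℂ) • !![1, 0; 0, -1]) *ᵥ ψ = (ε : ℂ) • ψ) :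
    ‖ψ 0‖ ^ 2 = (1 + ε * co) / 2 := by
  have e0 : (co : ℂ) * ψ 0 + s * ψ 1 = ε * ψ 0 := by
    simpa [mulVec, dotProduct, Fin.sum_univ_two] using congrFun h 0
  have e1 : (s : ℂ) * ψ 0 - co * ψ 1 = ε * ψ 1 := by
    simpa [mulVec, dotProduct, Fin.sum_univ_two, sub_eq_add_neg] using congrFun h 1
  -- Both equations compute `s * ψ 1 * conj (ψ 0)`, once through each row of `n·σ`.
  have via0 : (s : ℂ) * (ψ 1 * conj (ψ 0)) = ((ε - co) * ‖ψ 0‖ ^ 2 : ℝ) := by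
    push_cast
    rw [← Complex.mul_conj']
    linear_combination conj (ψ 0) * e0
  have via1 : (s : ℂ) * (ψ 1 * conj (ψ 0)) = ((ε + co) * ‖ψ 1‖ ^ 2 : ℝ) := by
    have e1' := congrArg conj e1
    simp only [map_sub, map_mul, Complex.conj_ofReal] at e1'
    push_cast
    rw [← Complex.mul_conj']
    linear_combination ψ 1 * e1'
  have hreal : (ε - co) * ‖ψ 0‖ ^ 2 = (ε + co) * ‖ψ 1‖ ^ 2 := by
    exact_mod_cast via0.symm.trans via1
  linear_combination ε / 2 * hreal + (ε + co) * ε / 2 * hunit - (‖ψ 0‖ ^ 2 - 1 / 2) * hε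

lemma mul_logb_two_mul (x : ℝ) (hx : 0 ≤ x) :
    x * logb 2 (2 * x) = x + x * logb 2 x := by
  rcases hx.eq_or_lt with rfl | hpos
  · simp
  · rw [logb_mul two_ne_zero hpos.ne', logb_self_eq_one one_lt_two]
    ring

lemma binEntropy_div_log_two (a : ℝ) :
    binEntropy a / log 2 = -(a * logb 2 a) - (1 - a) * logb 2 (1 - a) := by
  simp only [binEntropy, log_inv, logb]
  ring

lemma sum_mul_logb_two_mul_pair {a : ℝ} (ha₀ : 0 ≤ a) (ha₁ : a ≤ 1) :
    ∑ j, ![a, 1 - a] j * logb 2 (2 * ![a, 1 - a] j) = 1 - binEntropy a / log 2 := by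
  rw [Fin.sum_univ_two, binEntropy_div_log_two]
  simp only [cons_val_zero, cons_val_one]
  rw [mul_logb_two_mul a ha₀, mul_logb_two_mul (1 - a) (by linarith)]
  ring

lemma sum_mul_logb_two_mul_of_point_mass {q : Fin 2 → ℝ} (hq : q = ![1, 0] ∨ q = ![0, 1]) :
    ∑ k, q k * logb 2 (2 * q k) = 1 := by
  rcases hq with rfl | rfl <;> simp [Fin.sum_univ_two]

lemma cos_half_sq (θ : ℝ) : cos (θ / 2) ^ 2 = (1 + cos θ) / 2 := by
  rw [cos_sq, show 2 * (θ / 2) = θ by ring]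
  ring

lemma norm_sq_zero_of_pauli_eigen_eq_cos_half_sq_or (θ : ℝ) {ψ : Fin 2 → ℂ}
    (hunit : ‖ψ 0‖ ^ 2 + ‖ψ 1‖ ^ 2 = 1)
    (hev : ∃ c : ℂ,
      ((sin θ : ℂ) • !![0, 1; 1, 0] + (cos θ : ℂ) • !![1, 0; 0, -1]) *ᵥ ψ = c • ψ) :
    ‖ψ 0‖ ^ 2 = cos (θ / 2) ^ 2 ∨ ‖ψ 0‖ ^ 2 = 1 - cos (θ / 2) ^ 2 := by
  obtain ⟨c, hc⟩ := hev
  have hψ : ψ ≠ 0 := by rintro rfl; simp at hunit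
  have hsq : (sin θ : ℂ) ^ 2 + (cos θ : ℂ) ^ 2 = 1 := by exact_mod_cast sin_sq_add_cos_sq θ
  rw [cos_half_sq]
  rcases sq_eq_one_iff.mp
      (sq_eq_one_of_mulVec_eq_smul (pauli_combination_mul_self hsq) hψ hc) with rfl | rfl
  · left
    rw [norm_sq_zero_of_pauli_eigen (ε := 1) (by norm_num) hunit
      (by simpa only [Complex.ofReal_one] using hc)]
    ring
  · right
    rw [norm_sq_zero_of_pauli_eigen (ε := -1) (by norm_num) hunit
      (by simpa only [Complex.ofReal_neg, Complex.ofReal_one] using hc)]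
    ring

/-- For a unit eigenvector ψ of `n·σ = sin θ σ_x + cos θ σ_z`,
with `p` the measurement distribution of ψ in the standard (σ_z) basis and `q` its
distribution in an orthonormal eigenbasis of `n·σ` (so `q = (1,0)` or `(0,1)`),
one has `R(p) + R(q) = 2 − h(cos²(θ/2))`; in particular `R(p) + R(q) > 1` unless
`cos θ = 0`. -/
theorem stmt_5 (θ : ℝ)
    (σx σz : Matrix (Fin 2) (Fin 2) ℂ)
    (hσx : σx = !![0, 1; 1, 0]) (hσz : σz = !![1, 0; 0, -1])
    (ψ : Fin 2 → ℂ) (hunit : ‖ψ 0‖ ^ 2 + ‖ψ 1‖ ^ 2 = 1)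
    (hev : ∃ c : ℂ,
      Matrix.mulVec ((Real.sin θ : ℂ) • σx + (Real.cos θ : ℂ) • σz) ψ = c • ψ)
    (p q : Fin 2 → ℝ)
    (hp : p = ![‖ψ 0‖ ^ 2, ‖ψ 1‖ ^ 2])
    (hq : q = ![1, 0] ∨ q = ![0, 1]) :
    ((∑ j, p j * Real.logb 2 (2 * p j)) + (∑ k, q k * Real.logb 2 (2 * q k))
        = 2 - (-(Real.cos (θ / 2) ^ 2 * Real.logb 2 (Real.cos (θ / 2) ^ 2))
            - (1 - Real.cos (θ / 2) ^ 2) * Real.logb 2 (1 - Real.cos (θ / 2) ^ 2)))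
    ∧ (Real.cos θ ≠ 0 →
        1 < (∑ j, p j * Real.logb 2 (2 * p j))
            + (∑ k, q k * Real.logb 2 (2 * q k))) := by
  subst hσx hσz
  set C := cos (θ / 2) ^ 2 with hC
  have hC₀ : 0 ≤ C := sq_nonneg _
  have hC₁ : C ≤ 1 := cos_sq_le_one _
  have hsum : ∑ j, p j * logb 2 (2 * p j) = 1 - binEntropy C / log 2 := by
    have hψ1 : ‖ψ 1‖ ^ 2 = 1 - ‖ψ 0‖ ^ 2 := by linarith
    rw [hp, hψ1]
    rcases norm_sq_zero_of_pauli_eigen_eq_cos_half_sq_or θ hunit hev with h | h <;> rw [h]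
    · exact sum_mul_logb_two_mul_pair hC₀ hC₁
    · rw [sum_mul_logb_two_mul_pair (by linarith) (by linarith), binEntropy_one_sub]
  rw [hsum, sum_mul_logb_two_mul_of_point_mass hq, ← binEntropy_div_log_two]
  refine ⟨by ring, fun hcos => ?_⟩
  have hC_ne_half : C ≠ 2⁻¹ := by
    rw [hC, cos_half_sq]
    contrapose! hcos
    linarith
  have := (div_lt_one (log_pos one_lt_two)).mpr (binEntropy_lt_log_two.mpr hC_ne_half)
  linarith
end

section
/- Let ρ be a 2×2 density matrix (Hermitian, positive semidefinite, trace 1) and define its phase distribution P(φ) = (1/(2π)) ∫₀^π sin θ · ⟨v(θ,φ), ρ v(θ,φ)⟩ dθ, where v(θ,φ) = (sin(θ/2) e^{−iφ}, cos(θ/2)) ∈ ℂ². Then P(φ) = (1/(2π)) [ 1 + (π/2) Re( ρ_{12} e^{iφ} ) ] for all φ, and P is constant in φ (equal to 1/(2π)) if and only if ρ_{12} = 0, i.e. if and only if ρ is diagonal in the standard (Wigner–Dicke) basis. -/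
open scoped ComplexOrder

/-!
Expanding the quadratic form of the Hermitian matrix `ρ` at the coherent state `v(θ,φ)` gives
`sin²(θ/2) ρ₁₁ + cos²(θ/2) ρ₂₂ + sin θ · Re(ρ₁₂ e^{iφ})`. Against the weight `sin θ` the two
diagonal terms integrate to `1` each over `[0, π]` and `sin² θ` integrates to `π/2`, so the trace
condition gives the formula for `P`. Since `φ ↦ Re(ρ₁₂ e^{iφ})` vanishes identically only when
`ρ₁₂ = 0` (test `φ = 0` and `φ = π/2`), `P` is constant exactly when `ρ₁₂ = 0`.
-/

open Real Matrix

theorem Matrix.IsHermitian.re_star_dotProduct_mulVec_fin_two {ρ : Matrix (Fin 2) (Fin 2) ℂ}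
    (hρ : ρ.IsHermitian) (w : Fin 2 → ℂ) :
    (star w ⬝ᵥ ρ *ᵥ w).re = Complex.normSq (w 0) * (ρ 0 0).re
      + Complex.normSq (w 1) * (ρ 1 1).re + 2 * (star (w 0) * ρ 0 1 * w 1).re := by
  have h10 : ρ 1 0 = star (ρ 0 1) := (hρ.apply 1 0).symm
  simp only [dotProduct, mulVec, Fin.sum_univ_two, h10, Pi.star_apply, Complex.star_def,
    Complex.add_re, Complex.add_im, Complex.mul_re, Complex.mul_im, Complex.conj_re,
    Complex.conj_im, Complex.normSq_apply]
  ring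

theorem Matrix.IsHermitian.re_star_dotProduct_mulVec_coherentState
    {ρ : Matrix (Fin 2) (Fin 2) ℂ} (hρ : ρ.IsHermitian) (θ φ : ℝ) :
    (star ![(sin (θ / 2) : ℂ) * Complex.exp (-Complex.I * φ), (cos (θ / 2) : ℂ)]
        ⬝ᵥ ρ *ᵥ ![(sin (θ / 2) : ℂ) * Complex.exp (-Complex.I * φ), (cos (θ / 2) : ℂ)]).re
      = sin (θ / 2) ^ 2 * (ρ 0 0).re + cos (θ / 2) ^ 2 * (ρ 1 1).re
        + 2 * sin (θ / 2) * cos (θ / 2) * (ρ 0 1 * Complex.exp (Complex.I * φ)).re := by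
  have hconj : star ((sin (θ / 2) : ℂ) * Complex.exp (-Complex.I * φ))
      = sin (θ / 2) * Complex.exp (Complex.I * φ) := by
    rw [Complex.star_def, map_mul, Complex.conj_ofReal, ← Complex.exp_conj, map_mul,
      Complex.conj_ofReal, map_neg, Complex.conj_I, neg_neg]
  have hnormSq : Complex.normSq ((sin (θ / 2) : ℂ) * Complex.exp (-Complex.I * φ))
      = sin (θ / 2) ^ 2 := by
    rw [Complex.normSq_mul, Complex.normSq_ofReal, Complex.normSq_eq_norm_sq (Complex.exp _)]
    simp [Complex.norm_exp, sq]
  rw [hρ.re_star_dotProduct_mulVec_fin_two]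
  simp only [cons_val_zero, cons_val_one, hconj, hnormSq, Complex.normSq_ofReal]
  have hcross : sin (θ / 2) * Complex.exp (Complex.I * φ) * ρ 0 1 * cos (θ / 2)
      = ((sin (θ / 2) * cos (θ / 2) : ℝ) : ℂ) * (ρ 0 1 * Complex.exp (Complex.I * φ)) := by
    push_cast
    ring
  rw [hcross, Complex.re_ofReal_mul]
  ring

theorem integral_sin_mul_half_angle_form (a d k : ℝ) :
    ∫ θ in (0 : ℝ)..π, sin θ * (sin (θ / 2) ^ 2 * a + cos (θ / 2) ^ 2 * d
      + 2 * sin (θ / 2) * cos (θ / 2) * k) = a + d + π / 2 * k := by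
  have half_angle : ∀ θ : ℝ, sin θ * (sin (θ / 2) ^ 2 * a + cos (θ / 2) ^ 2 * d
      + 2 * sin (θ / 2) * cos (θ / 2) * k)
      = (a + d) / 2 * sin θ + (d - a) / 2 * (sin θ * cos θ) + k * sin θ ^ 2 := by
    intro θ
    have hsin : sin θ = 2 * sin (θ / 2) * cos (θ / 2) := by
      rw [← sin_two_mul, mul_div_cancel₀ _ two_ne_zero]
    have hcos : cos θ = 2 * cos (θ / 2) ^ 2 - 1 := by
      rw [← cos_two_mul, mul_div_cancel₀ _ two_ne_zero]
    rw [hsin, hcos]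
    linear_combination 2 * a * sin (θ / 2) * cos (θ / 2) * sin_sq_add_cos_sq (θ / 2)
  have hint : ∀ f : ℝ → ℝ, Continuous f → IntervalIntegrable f MeasureTheory.volume 0 π :=
    fun f hf => hf.intervalIntegrable 0 π
  simp_rw [half_angle]
  rw [intervalIntegral.integral_add (hint _ (by fun_prop)) (hint _ (by fun_prop)),
    intervalIntegral.integral_add (hint _ (by fun_prop)) (hint _ (by fun_prop))]
  simp only [intervalIntegral.integral_const_mul, integral_sin, integral_sin_mul_cos₁,
    integral_sin_sq, sin_zero, sin_pi, cos_zero, cos_pi]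
  ring

theorem Complex.eq_zero_of_forall_re_mul_exp_eq_zero {z : ℂ}
    (h : ∀ φ : ℝ, (z * exp (I * φ)).re = 0) : z = 0 := by
  have h0 := h 0
  have h1 := h (π / 2)
  rw [ofReal_zero, mul_zero, exp_zero, mul_one] at h0
  rw [mul_comm I, ofReal_div, ofReal_ofNat, exp_pi_div_two_mul_I] at h1
  exact ext h0 (by simpa using h1)

theorem stmt_9_general (ρ : Matrix (Fin 2) (Fin 2) ℂ)
    (hherm : ρ.IsHermitian) (htr : ρ.trace = 1)
    (v : ℝ → ℝ → Fin 2 → ℂ)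
    (hv : ∀ θ φ, v θ φ =
      ![(Real.sin (θ / 2) : ℂ) * Complex.exp (-Complex.I * φ),
        (Real.cos (θ / 2) : ℂ)])
    (P : ℝ → ℝ)
    (hP : ∀ φ, P φ = (1 / (2 * Real.pi)) *
      ∫ θ in (0 : ℝ)..Real.pi,
        Real.sin θ * (dotProduct (star (v θ φ)) (ρ.mulVec (v θ φ))).re) :
    (∀ φ, P φ = (1 / (2 * Real.pi)) *
        (1 + (Real.pi / 2) * (ρ 0 1 * Complex.exp (Complex.I * φ)).re))
    ∧ ((∀ φ, P φ = 1 / (2 * Real.pi)) ↔ ρ 0 1 = 0) := by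
  have hdiag : (ρ 0 0).re + (ρ 1 1).re = 1 := by
    simpa [trace, Fin.sum_univ_two] using congrArg Complex.re htr
  have hformula : ∀ φ, P φ = (1 / (2 * π)) *
      (1 + (π / 2) * (ρ 0 1 * Complex.exp (Complex.I * φ)).re) := by
    intro φ
    simp_rw [hP, hv, hherm.re_star_dotProduct_mulVec_coherentState,
      integral_sin_mul_half_angle_form, hdiag]
  refine ⟨hformula, ⟨fun hconst => ?_, fun h01 φ => by simp [hformula, h01]⟩⟩
  refine Complex.eq_zero_of_forall_re_mul_exp_eq_zero fun φ => ?_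
  have h := (hformula φ).symm.trans (hconst φ)
  field_simp at h
  simpa [pi_ne_zero] using h

/-- For a 2×2 density matrix ρ, its phase distribution
`P(φ) = (1/(2π)) ∫₀^π sin θ ⟨v(θ,φ), ρ v(θ,φ)⟩ dθ`, where
`v(θ,φ) = (sin(θ/2) e^{−iφ}, cos(θ/2))`, satisfies
`P(φ) = (1/(2π))[1 + (π/2) Re(ρ₁₂ e^{iφ})]` for all φ, and `P` is constant
(equal to `1/(2π)`) iff `ρ₁₂ = 0`, i.e. iff ρ is diagonal in the
Wigner–Dicke basis. -/
theorem stmt_9 (ρ : Matrix (Fin 2) (Fin 2) ℂ)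
    (hherm : ρ.IsHermitian) (hpsd : ρ.PosSemidef) (htr : ρ.trace = 1)
    (v : ℝ → ℝ → Fin 2 → ℂ)
    (hv : ∀ θ φ, v θ φ =
      ![(Real.sin (θ / 2) : ℂ) * Complex.exp (-Complex.I * φ),
        (Real.cos (θ / 2) : ℂ)])
    (P : ℝ → ℝ)
    (hP : ∀ φ, P φ = (1 / (2 * Real.pi)) *
      ∫ θ in (0 : ℝ)..Real.pi,
        Real.sin θ * (dotProduct (star (v θ φ)) (ρ.mulVec (v θ φ))).re) :
    (∀ φ, P φ = (1 / (2 * Real.pi)) *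
        (1 + (Real.pi / 2) * (ρ 0 1 * Complex.exp (Complex.I * φ)).re))
    ∧ ((∀ φ, P φ = 1 / (2 * Real.pi)) ↔ ρ 0 1 = 0) :=
  stmt_9_general ρ hherm htr v hv P hP
end

section
/- Let α′ ∈ [0,π] and β′ ∈ [0,2π], and let ψ = v(α′,β′) = (sin(α′/2) e^{−iβ′}, cos(α′/2)) ∈ ℂ² be the spin-1/2 atomic coherent state. Then its phase distribution satisfies, for every φ, (1/(2π)) ∫₀^π sin θ · |⟨v(θ,φ), ψ⟩|² dθ = (1/(2π)) [ 1 + (π/4) sin(α′) cos(β′ − φ) ]. -/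
/-!
The overlap of two spin-1/2 coherent states is `|⟨v(θ,φ), v(α,β)⟩|² = (1 + n·n')/2`, where
`n, n'` are the corresponding unit vectors on the Bloch sphere. Integrating `sin θ` against it over
`θ ∈ [0, π]`, the constant term gives `1`, the `cos θ cos α` term integrates to `0` and the
`sin θ sin α cos (φ - β)` term gives `(π/4) sin α cos (φ - β)`.
-/

open Real

noncomputable def spinHalfCoherentState (θ φ : ℝ) : Fin 2 → ℂ :=
  ![(sin (θ / 2) : ℂ) * Complex.exp (-Complex.I * φ), (cos (θ / 2) : ℂ)]

theorem norm_ofReal_mul_exp_mul_I_add_ofReal_sq (a b ξ : ℝ) :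
    ‖(a : ℂ) * Complex.exp (ξ * Complex.I) + b‖ ^ 2
      = a ^ 2 + b ^ 2 + 2 * a * b * cos ξ := by
  have h : (a : ℂ) * Complex.exp (ξ * Complex.I) + b = ⟨a * cos ξ + b, a * sin ξ⟩ := by
    apply Complex.ext <;> simp [Complex.exp_mul_I, Complex.cos_ofReal_re, Complex.sin_ofReal_re]
  rw [h, Complex.sq_norm, Complex.normSq_mk]
  linear_combination a ^ 2 * sin_sq_add_cos_sq ξ

theorem star_dotProduct_spinHalfCoherentState (θ φ α β : ℝ) :
    star (spinHalfCoherentState θ φ) ⬝ᵥ spinHalfCoherentState α β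
      = ((sin (θ / 2) * sin (α / 2) : ℝ) : ℂ) * Complex.exp ((φ - β : ℝ) * Complex.I)
        + ((cos (θ / 2) * cos (α / 2) : ℝ) : ℂ) := by
  have hexp : Complex.exp ((φ - β : ℝ) * Complex.I)
      = Complex.exp (φ * Complex.I) * Complex.exp (-Complex.I * β) := by
    rw [← Complex.exp_add]; push_cast; ring_nf
  simp only [spinHalfCoherentState, dotProduct, Fin.sum_univ_two, Pi.star_apply,
    Matrix.cons_val_zero, Matrix.cons_val_one, Complex.star_def, ← Complex.exp_conj,
    map_mul, map_neg, Complex.conj_I, Complex.conj_ofReal, hexp]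
  push_cast
  ring_nf

theorem norm_star_dotProduct_spinHalfCoherentState_sq (θ φ α β : ℝ) :
    ‖star (spinHalfCoherentState θ φ) ⬝ᵥ spinHalfCoherentState α β‖ ^ 2
      = (1 + cos θ * cos α + sin θ * sin α * cos (φ - β)) / 2 := by
  have hcos (x : ℝ) : cos x = 2 * cos (x / 2) ^ 2 - 1 := by
    rw [cos_sq, show 2 * (x / 2) = x by ring]; ring
  have hsin (x : ℝ) : sin x = 2 * sin (x / 2) * cos (x / 2) := by
    rw [← sin_two_mul, show 2 * (x / 2) = x by ring]
  rw [star_dotProduct_spinHalfCoherentState, norm_ofReal_mul_exp_mul_I_add_ofReal_sq,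
    hcos θ, hcos α, hsin θ, hsin α]
  linear_combination sin (θ / 2) ^ 2 * sin_sq_add_cos_sq (α / 2)
    + (1 - cos (α / 2) ^ 2) * sin_sq_add_cos_sq (θ / 2)

theorem integral_sin_mul_norm_star_dotProduct_spinHalfCoherentState_sq (φ α β : ℝ) :
    ∫ θ in (0 : ℝ)..π,
        sin θ * ‖star (spinHalfCoherentState θ φ) ⬝ᵥ spinHalfCoherentState α β‖ ^ 2
      = 1 + π / 4 * sin α * cos (φ - β) := by
  have hsplit (θ : ℝ) : sin θ * ((1 + cos θ * cos α + sin θ * sin α * cos (φ - β)) / 2)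
      = sin θ / 2 + cos α / 2 * (sin θ * cos θ) + sin α * cos (φ - β) / 2 * sin θ ^ 2 := by
    ring
  have hint {f : ℝ → ℝ} (hf : Continuous f) :
      IntervalIntegrable f MeasureTheory.volume 0 π :=
    hf.intervalIntegrable _ _
  simp_rw [norm_star_dotProduct_spinHalfCoherentState_sq, hsplit]
  rw [intervalIntegral.integral_add (hint (by fun_prop)) (hint (by fun_prop)),
    intervalIntegral.integral_add (hint (by fun_prop)) (hint (by fun_prop)),
    intervalIntegral.integral_div, intervalIntegral.integral_const_mul,
    intervalIntegral.integral_const_mul, integral_sin, integral_sin_mul_cos₁, integral_sin_sq]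
  simp only [cos_zero, cos_pi, sin_zero, sin_pi]
  ring

theorem stmt_11_general (α' β' : ℝ)
    (v : ℝ → ℝ → Fin 2 → ℂ)
    (hv : ∀ θ φ, v θ φ =
      ![(Real.sin (θ / 2) : ℂ) * Complex.exp (-Complex.I * φ),
        (Real.cos (θ / 2) : ℂ)])
    (ψ : Fin 2 → ℂ) (hψ : ψ = v α' β') :
    ∀ φ : ℝ,
      (1 / (2 * Real.pi)) *
          ∫ θ in (0 : ℝ)..Real.pi,
            Real.sin θ * ‖dotProduct (star (v θ φ)) ψ‖ ^ 2
        = (1 / (2 * Real.pi)) *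
            (1 + (Real.pi / 4) * Real.sin α' * Real.cos (β' - φ)) := by
  intro φ
  obtain rfl : v = spinHalfCoherentState := funext₂ hv
  rw [hψ, integral_sin_mul_norm_star_dotProduct_spinHalfCoherentState_sq, ← cos_neg, neg_sub]

/-- The phase distribution of the spin-1/2 atomic coherent state
`ψ = v(α′,β′) = (sin(α′/2) e^{−iβ′}, cos(α′/2))` is
`P(φ) = (1/(2π))[1 + (π/4) sin α′ cos(β′ − φ)]`. -/
theorem stmt_11 (α' β' : ℝ) (hα' : α' ∈ Set.Icc (0 : ℝ) Real.pi)
    (hβ' : β' ∈ Set.Icc (0 : ℝ) (2 * Real.pi))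
    (v : ℝ → ℝ → Fin 2 → ℂ)
    (hv : ∀ θ φ, v θ φ =
      ![(Real.sin (θ / 2) : ℂ) * Complex.exp (-Complex.I * φ),
        (Real.cos (θ / 2) : ℂ)])
    (ψ : Fin 2 → ℂ) (hψ : ψ = v α' β') :
    ∀ φ : ℝ,
      (1 / (2 * Real.pi)) *
          ∫ θ in (0 : ℝ)..Real.pi,
            Real.sin θ * ‖dotProduct (star (v θ φ)) ψ‖ ^ 2
        = (1 / (2 * Real.pi)) *
            (1 + (Real.pi / 4) * Real.sin α' * Real.cos (β' - φ)) :=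
  stmt_11_general α' β' v hv ψ hψ
end

section
/- The phase knowledge of a distribution of the form (1/(2π))(1 + s cos φ) is monotone in the modulation amplitude: for all real s, s′ with 0 ≤ s ≤ s′ ≤ 1, ∫₀^{2π} (1 + s cos φ) log₂(1 + s cos φ) dφ ≤ ∫₀^{2π} (1 + s′ cos φ) log₂(1 + s′ cos φ) dφ, with the convention 0·log₂ 0 = 0. Consequently, among the qubit atomic coherent states |α′,β′⟩, whose phase distribution is (1/(2π))[1 + (π/4) sin α′ cos(β′−φ)], the phase knowledge R_φ is maximal at α′ = π/2 (the equatorial states) and minimal (equal to 0) at α′ = 0 and α′ = π. -/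
/-!
Write `G x = x log₂ x`, which is convex on `[0, ∞)`. For `0 ≤ s ≤ s'` the point `1 + s cos φ` is
the convex combination of `1 + s' cos φ` and `1 - s' cos φ` with weights `(s' + s)/(2s')` and
`(s' - s)/(2s')`, so Jensen bounds `G (1 + s cos φ)` pointwise. Since `φ ↦ φ + π` turns `cos`
into `-cos` and preserves the integral over a period, both terms of the bound integrate to
`∫ G (1 + s' cos φ)`. For the coherent states, the phase `β'` drops out by the same translation
invariance, and `α' ↦ (π/4) sin α'` ranges over `[0, π/4]`, with maximum at `π/2` and value `0`
at `0` and `π`.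
-/

open Real Set intervalIntegral

lemma integral_comp_cos_add (g : ℝ → ℝ) (c : ℝ) :
    ∫ φ in (0 : ℝ)..2 * π, g (cos (φ + c)) = ∫ φ in (0 : ℝ)..2 * π, g (cos φ) := by
  have hper : Function.Periodic (fun φ => g (cos φ)) (2 * π) := fun φ => by
    simp only [cos_add_two_pi]
  rw [integral_comp_add_right (fun φ => g (cos φ)), zero_add, add_comm]
  simpa only [zero_add] using hper.intervalIntegral_add_eq c 0

lemma integral_comp_cos_sub (g : ℝ → ℝ) (β : ℝ) :
    ∫ φ in (0 : ℝ)..2 * π, g (cos (β - φ)) = ∫ φ in (0 : ℝ)..2 * π, g (cos φ) := by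
  simp_rw [← cos_neg (β - _), neg_sub, sub_eq_add_neg]
  exact integral_comp_cos_add g (-β)

lemma integral_comp_neg_cos (g : ℝ → ℝ) :
    ∫ φ in (0 : ℝ)..2 * π, g (-cos φ) = ∫ φ in (0 : ℝ)..2 * π, g (cos φ) := by
  simp_rw [← cos_add_pi]
  exact integral_comp_cos_add g π

lemma ConvexOn.apply_one_add_mul_le {f : ℝ → ℝ} (hf : ConvexOn ℝ (Ici 0) f) {s s' c : ℝ}
    (hs' : 0 < s') (hss' : |s| ≤ s') (hc : |s' * c| ≤ 1) :
    f (1 + s * c) ≤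
      (s' + s) / (2 * s') * f (1 + s' * c) + (s' - s) / (2 * s') * f (1 + s' * -c) := by
  obtain ⟨hs₁, hs₂⟩ := abs_le.mp hss'
  obtain ⟨hc₁, hc₂⟩ := abs_le.mp hc
  calc f (1 + s * c)
      = f (((s' + s) / (2 * s')) • (1 + s' * c) + ((s' - s) / (2 * s')) • (1 + s' * -c)) := by
        congr 1; simp only [smul_eq_mul]; field_simp; ring
    _ ≤ _ := hf.2 (by rw [mem_Ici]; linarith) (by rw [mem_Ici]; linarith)
        (div_nonneg (by linarith) (by positivity)) (div_nonneg (by linarith) (by positivity))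
        (by field_simp; ring)

lemma integral_comp_one_add_mul_cos_mono {f : ℝ → ℝ} (hf : ConvexOn ℝ (Ici 0) f)
    (hfc : Continuous f) {s s' : ℝ} (hs : 0 ≤ s) (hss' : s ≤ s') (hs' : s' ≤ 1) :
    ∫ φ in (0 : ℝ)..2 * π, f (1 + s * cos φ) ≤
      ∫ φ in (0 : ℝ)..2 * π, f (1 + s' * cos φ) := by
  rcases (hs.trans hss').eq_or_lt with rfl | hs'pos
  · rw [le_antisymm hss' hs]
  set a := (s' + s) / (2 * s')
  set b := (s' - s) / (2 * s')
  have hint : ∀ c : ℝ → ℝ, Continuous c →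
      IntervalIntegrable (fun φ => f (1 + s' * c φ)) MeasureTheory.volume 0 (2 * π) :=
    fun c hc => Continuous.intervalIntegrable (by fun_prop) _ _
  calc ∫ φ in (0 : ℝ)..2 * π, f (1 + s * cos φ)
      ≤ ∫ φ in (0 : ℝ)..2 * π, (a * f (1 + s' * cos φ) + b * f (1 + s' * -cos φ)) := by
        refine integral_mono_on (by positivity) (Continuous.intervalIntegrable (by fun_prop) _ _)
          (Continuous.intervalIntegrable (by fun_prop) _ _) fun φ _ => ?_
        refine hf.apply_one_add_mul_le hs'pos (by rwa [abs_of_nonneg hs]) ?_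
        rw [abs_mul, abs_of_pos hs'pos]
        exact mul_le_one₀ hs' (abs_nonneg _) (abs_cos_le_one φ)
    _ = (a + b) * ∫ φ in (0 : ℝ)..2 * π, f (1 + s' * cos φ) := by
        rw [integral_add ((hint _ continuous_cos).const_mul a)
            ((hint (-cos ·) (by fun_prop)).const_mul b), integral_const_mul, integral_const_mul,
          integral_comp_neg_cos (fun c => f (1 + s' * c)), add_mul]
    _ = ∫ φ in (0 : ℝ)..2 * π, f (1 + s' * cos φ) := by
        rw [show a + b = 1 by simp only [a, b]; field_simp; ring, one_mul]

lemma convexOn_mul_logb {b : ℝ} (hb : 1 ≤ b) : ConvexOn ℝ (Ici 0) fun x => x * logb b x :=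
  (convexOn_mul_log.smul (inv_nonneg.mpr (log_nonneg hb))).congr fun x _ => by
    simp only [logb, smul_eq_mul]; ring

lemma continuous_mul_logb (b : ℝ) : Continuous fun x => x * logb b x := by
  simpa only [logb, mul_div_assoc'] using continuous_mul_log.div_const (log b)

noncomputable def phaseEntropyIntegral (s : ℝ) : ℝ :=
  ∫ φ in (0 : ℝ)..2 * π, (1 + s * cos φ) * logb 2 (1 + s * cos φ)

lemma phaseEntropyIntegral_mono {s s' : ℝ} (hs : 0 ≤ s) (hss' : s ≤ s') (hs' : s' ≤ 1) :
    phaseEntropyIntegral s ≤ phaseEntropyIntegral s' :=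
  integral_comp_one_add_mul_cos_mono (f := fun x => x * logb 2 x)
    (convexOn_mul_logb one_le_two) (continuous_mul_logb 2) hs hss' hs'

@[simp]
lemma phaseEntropyIntegral_zero : phaseEntropyIntegral 0 = 0 := by
  simp [phaseEntropyIntegral]

lemma phaseEntropyIntegral_nonneg {s : ℝ} (hs : 0 ≤ s) (hs' : s ≤ 1) :
    0 ≤ phaseEntropyIntegral s :=
  phaseEntropyIntegral_zero ▸ phaseEntropyIntegral_mono le_rfl hs hs'

lemma pi_div_four_mul_sin_mem_Icc {α : ℝ} (hα : α ∈ Icc 0 π) :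
    π / 4 * sin α ∈ Icc 0 (π / 4) :=
  ⟨mul_nonneg (by positivity) (sin_nonneg_of_nonneg_of_le_pi hα.1 hα.2),
    mul_le_of_le_one_right (by positivity) (sin_le_one α)⟩

lemma pi_div_four_le_one : π / 4 ≤ 1 := by linarith [pi_lt_four]

/-- The phase knowledge of `(1/(2π))(1 + s cos φ)` is monotone
in the modulation amplitude `s ∈ [0,1]`; consequently among the qubit atomic
coherent states `|α′,β′⟩`, whose phase distribution is
`(1/(2π))[1 + (π/4) sin α′ cos(β′−φ)]`, the phase knowledge `R_φ` is maximal at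
`α′ = π/2` and minimal (equal to 0) at `α′ = 0` and `α′ = π`. -/
theorem stmt_13
    (Rφ : ℝ → ℝ → ℝ)
    (hR : ∀ α' β', Rφ α' β' = (1 / (2 * Real.pi)) *
      ∫ φ in (0 : ℝ)..(2 * Real.pi),
        (1 + (Real.pi / 4) * Real.sin α' * Real.cos (β' - φ)) *
          Real.logb 2 (1 + (Real.pi / 4) * Real.sin α' * Real.cos (β' - φ))) :
    (∀ s s' : ℝ, 0 ≤ s → s ≤ s' → s' ≤ 1 →
      (∫ φ in (0 : ℝ)..(2 * Real.pi),
          (1 + s * Real.cos φ) * Real.logb 2 (1 + s * Real.cos φ))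
        ≤ ∫ φ in (0 : ℝ)..(2 * Real.pi),
            (1 + s' * Real.cos φ) * Real.logb 2 (1 + s' * Real.cos φ))
    ∧ (∀ α' β', α' ∈ Set.Icc (0 : ℝ) Real.pi → Rφ α' β' ≤ Rφ (Real.pi / 2) β')
    ∧ (∀ α' β', α' ∈ Set.Icc (0 : ℝ) Real.pi → 0 ≤ Rφ α' β')
    ∧ (∀ β', Rφ 0 β' = 0 ∧ Rφ Real.pi β' = 0) := by
  have hRφ : ∀ α' β', Rφ α' β' = 1 / (2 * π) * phaseEntropyIntegral (π / 4 * sin α') :=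
    fun α' β' => by
      rw [hR, phaseEntropyIntegral, ← integral_comp_cos_sub
        (fun c => (1 + π / 4 * sin α' * c) * logb 2 (1 + π / 4 * sin α' * c)) β']
  have hscale : 0 ≤ 1 / (2 * π) := by positivity
  refine ⟨fun s s' => phaseEntropyIntegral_mono, fun α' β' hα => ?_, fun α' β' hα => ?_,
    fun β' => by simp [hRφ]⟩
  · obtain ⟨h₀, h₁⟩ := pi_div_four_mul_sin_mem_Icc hα
    rw [hRφ, hRφ, sin_pi_div_two, mul_one]
    exact mul_le_mul_of_nonneg_left (phaseEntropyIntegral_mono h₀ h₁ pi_div_four_le_one) hscale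
  · obtain ⟨h₀, h₁⟩ := pi_div_four_mul_sin_mem_Icc hα
    rw [hRφ]
    exact mul_nonneg hscale (phaseEntropyIntegral_nonneg h₀ (h₁.trans pi_div_four_le_one))
end
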